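/- Every 1-generic real X is relatively c.e.a.: there is a real Y with Y <_T X such that X is c.e.(Y). -/

import Mathlib

open Classical in
/-- The characteristic (total) function of a set of naturals, as a partial function. -/
noncomputable def chi (X : Set ℕ) : ℕ →. ℕ :=
  fun n => Part.some (if n ∈ X then 1 else 0)

/-- Partial functions computable relative to an oracle `O`. -/
inductive RecursiveInOracle (O : ℕ →. ℕ) : (ℕ →. ℕ) → Prop
  | zero : RecursiveInOracle O fun _ => 0
  | succ : RecursiveInOracle O Nat.succ
  | left : RecursiveInOracle O fun n => (Nat.unpair n).1
  | right : RecursiveInOracle O fun n => (Nat.unpair n).2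
  | oracle : RecursiveInOracle O O
  | pair {f g : ℕ →. ℕ} : RecursiveInOracle O f → RecursiveInOracle O g →
      RecursiveInOracle O fun n => Nat.pair <$> f n <*> g n
  | comp {f g : ℕ →. ℕ} : RecursiveInOracle O f → RecursiveInOracle O g →
      RecursiveInOracle O fun n => g n >>= f
  | prec {f g : ℕ →. ℕ} : RecursiveInOracle O f → RecursiveInOracle O g →
      RecursiveInOracle O (Nat.unpaired fun a n =>
        n.rec (f a) fun y IH => do let i ← IH; g (Nat.pair a (Nat.pair y i)))
  | rfind {f : ℕ →. ℕ} : RecursiveInOracle O f →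
      RecursiveInOracle O fun a => Nat.rfind fun n => (fun m => m = 0) <$> f (Nat.pair a n)

/-- `X ≤_T Y` : `X` is computable with oracle `Y`. -/
def TuringLE (X Y : Set ℕ) : Prop := RecursiveInOracle (chi Y) (chi X)

/-- `X` is c.e.(`Y`) : `X` is the domain of a partial function computable with oracle `Y`. -/
def CEIn (Y X : Set ℕ) : Prop := ∃ f : ℕ →. ℕ, RecursiveInOracle (chi Y) f ∧ X = f.Dom

/-- `X` is relatively c.e. -/
def RelativelyCE (X : Set ℕ) : Prop := ∃ Y : Set ℕ, CEIn Y X ∧ ¬ TuringLE X Y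

/-- A computably enumerable predicate (unrelativized). -/
def CEPred {α : Type} [Primcodable α] (p : α → Prop) : Prop :=
  ∃ f : α →. Unit, Partrec f ∧ ∀ a, p a ↔ (f a).Dom

/-- `A ≤_e B` : enumeration reducibility. -/
def EnumLE (A B : Set ℕ) : Prop :=
  ∃ C : Set (ℕ × Finset ℕ), CEPred (· ∈ C) ∧
    ∀ n, n ∈ A ↔ ∃ E : Finset ℕ, ↑E ⊆ B ∧ (n, E) ∈ C

open Classical in
/-- `X ↾ k` : the binary string of the first `k` values of the characteristic function. -/
noncomputable def seg (X : Set ℕ) (k : ℕ) : List Bool :=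
  (List.range k).map fun n => decide (n ∈ X)

/-- `X` is 1-generic. -/
def OneGeneric (X : Set ℕ) : Prop :=
  ∀ S : Set (List Bool), CEPred (· ∈ S) →
    (∃ k, seg X k ∈ S) ∨ (∃ k, ∀ σ : List Bool, seg X k <+: σ → σ ∉ S)

/-- `X` is an infinite path through the tree `T`. -/
def IsPath (T : Set (List Bool)) (X : Set ℕ) : Prop := ∀ k, seg X k ∈ T

/-- `T` is a computable tree of finite binary strings. -/
def ComputableTree (T : Set (List Bool)) : Prop :=
  (∀ σ τ : List Bool, σ ∈ T → τ <+: σ → τ ∈ T) ∧ ComputablePred (· ∈ T)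

/-!
Let `Y = {⟨a, m⟩ | a ∈ X ∧ 2⟨a, m⟩ + 1 ∉ X}`. Clearly `Y ≤_T X`; and `X` is c.e. in `Y`, because
genericity gives every `a ∈ X` an `m` with `2⟨a, m⟩ + 1 ∉ X`.

Suppose `X = Φ^Y`. By the use principle a halting computation `Φ^Y(n)` reads only an initial segment
of `Y`, and initial segments of `Y` are computed from initial segments of `X`. Hence the strings `σ`
such that `σ(n) = 1` for some `n` at which `Φ`, run on the part of `Y` determined by `σ`, outputs `0`
form a c.e. set. No initial segment of `X` lies in it, so genericity yields a `k` such that no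
extension of `X ↾ k` does. Now take an even `n ≥ k` outside `X` and switch on bit `n` together with
every odd bit `2q + 1 ≥ k` with `q ∉ Y`. This changes neither `X ↾ k` nor `Y`, so the long initial
segments of the modified set are extensions of `X ↾ k` in the c.e. set.
-/

open Filter

namespace Combinator

def pair (f g : ℕ →. ℕ) : ℕ →. ℕ := fun n => Nat.pair <$> f n <*> g n

def comp (f g : ℕ →. ℕ) : ℕ →. ℕ := fun n => g n >>= f

def prec (f g : ℕ →. ℕ) : ℕ →. ℕ :=
  Nat.unpaired fun a n => n.rec (f a) fun y IH => do let i ← IH; g (Nat.pair a (Nat.pair y i))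

def rfind (f : ℕ →. ℕ) : ℕ →. ℕ :=
  fun a => Nat.rfind fun n => (fun m => m = 0) <$> f (Nat.pair a n)

-- Extension is stated pointwise in the order of `Part`: on `ℕ →. ℕ` itself Mathlib's `≤` is
-- Turing reducibility.
variable {f f' g g' : ℕ →. ℕ}

theorem mem_pair {n v : ℕ} : v ∈ pair f g n ↔ ∃ a ∈ f n, ∃ b ∈ g n, Nat.pair a b = v := by
  simp [pair, Seq.seq]

theorem mem_comp {n v : ℕ} : v ∈ comp f g n ↔ ∃ w ∈ g n, v ∈ f w :=
  Part.mem_bind_iff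

@[simp] theorem prec_pair_zero (a : ℕ) : prec f g (Nat.pair a 0) = f a := by
  simp [prec]

@[simp] theorem prec_pair_succ (a m : ℕ) :
    prec f g (Nat.pair a (m + 1)) =
      prec f g (Nat.pair a m) >>= fun i => g (Nat.pair a (Nat.pair m i)) := by
  simp [prec]

theorem mem_rfind {a v : ℕ} :
    v ∈ rfind f a ↔ 0 ∈ f (Nat.pair a v) ∧ ∀ m < v, ∃ w ∈ f (Nat.pair a m), w ≠ 0 := by
  refine Nat.mem_rfind.trans ?_
  simp

theorem pair_mono (hf : ∀ n, f n ≤ f' n) (hg : ∀ n, g n ≤ g' n) :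
    ∀ n, pair f g n ≤ pair f' g' n := by
  intro n v hv
  obtain ⟨a, ha, b, hb, rfl⟩ := mem_pair.1 hv
  exact mem_pair.2 ⟨a, hf n a ha, b, hg n b hb, rfl⟩

theorem comp_mono (hf : ∀ n, f n ≤ f' n) (hg : ∀ n, g n ≤ g' n) :
    ∀ n, comp f g n ≤ comp f' g' n := by
  intro n v hv
  obtain ⟨w, hw, hv⟩ := mem_comp.1 hv
  exact mem_comp.2 ⟨w, hg n w hw, hf w v hv⟩

theorem prec_mono (hf : ∀ n, f n ≤ f' n) (hg : ∀ n, g n ≤ g' n) :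
    ∀ n, prec f g n ≤ prec f' g' n := by
  intro n
  obtain ⟨a, m, rfl⟩ : ∃ a m, n = Nat.pair a m := ⟨_, _, (Nat.pair_unpair n).symm⟩
  induction m with
  | zero => simpa using hf _
  | succ m ih =>
    simp only [prec_pair_succ]
    intro v hv
    obtain ⟨i, hi, hv⟩ := Part.mem_bind_iff.1 hv
    exact Part.mem_bind_iff.2 ⟨i, ih i hi, hg _ v hv⟩

theorem rfind_mono (hf : ∀ n, f n ≤ f' n) : ∀ n, rfind f n ≤ rfind f' n := by
  intro a v hv
  obtain ⟨h0, hlt⟩ := mem_rfind.1 hv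
  refine mem_rfind.2 ⟨hf _ 0 h0, fun m hm => ?_⟩
  obtain ⟨w, hw, hw0⟩ := hlt m hm
  exact ⟨w, hf _ w hw, hw0⟩

section Partrec

variable {β : Type} [Primcodable β] {F G : β → ℕ →. ℕ}

theorem partrec₂_pair (hF : Partrec₂ F) (hG : Partrec₂ G) :
    Partrec₂ fun b => pair (F b) (G b) := by
  have h1 : Partrec fun q : (β × ℕ) × ℕ => (G q.1.1 q.1.2).map (Nat.pair q.2) :=
    (hG.comp (Computable.fst.comp Computable.fst) (Computable.snd.comp Computable.fst)).map
      (Primrec₂.natPair.comp (Primrec.snd.comp Primrec.fst) Primrec.snd).to_comp.to₂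
  exact (hF.bind h1.to₂).of_eq fun p => by simp [pair, Seq.seq]

theorem partrec₂_comp (hF : Partrec₂ F) (hG : Partrec₂ G) :
    Partrec₂ fun b => comp (F b) (G b) :=
  hG.bind (hF.comp (Computable.fst.comp Computable.fst) Computable.snd).to₂

theorem partrec₂_prec (hF : Partrec₂ F) (hG : Partrec₂ G) :
    Partrec₂ fun b => prec (F b) (G b) := by
  have hgp : Partrec fun p : β × ℕ => F p.1 p.2.unpair.1 :=
    hF.comp Computable.fst (Primrec.fst.comp (Primrec.unpair.comp Primrec.snd)).to_comp
  have hhp : Partrec fun q : (β × ℕ) × (ℕ × ℕ) =>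
      G q.1.1 (Nat.pair q.1.2.unpair.1 (Nat.pair q.2.1 q.2.2)) :=
    hG.comp (Computable.fst.comp Computable.fst)
      (Primrec₂.natPair.comp
        (Primrec.fst.comp (Primrec.unpair.comp (Primrec.snd.comp Primrec.fst)))
        (Primrec₂.natPair.comp (Primrec.fst.comp Primrec.snd)
          (Primrec.snd.comp Primrec.snd))).to_comp
  exact (Partrec.nat_rec (Primrec.snd.comp (Primrec.unpair.comp Primrec.snd)).to_comp
    hgp hhp.to₂).of_eq fun p => by simp only [prec, Nat.unpaired]; rfl

theorem partrec₂_rfind (hF : Partrec₂ F) : Partrec₂ fun b => rfind (F b) := by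
  have hFc : Partrec fun q : (β × ℕ) × ℕ => F q.1.1 (Nat.pair q.1.2 q.2) :=
    hF.comp (Computable.fst.comp Computable.fst)
      (Primrec₂.natPair.comp (Primrec.snd.comp Primrec.fst) Primrec.snd).to_comp
  exact Partrec.rfind
    (hFc.map (Primrec.eq.comp Primrec.snd (Primrec.const 0)).decide.to_comp.to₂).to₂

end Partrec

end Combinator

def EventuallyExtends {ι : Type*} (l : Filter ι) (F : ι → ℕ →. ℕ) (f : ℕ →. ℕ) : Prop :=
  ∀ n, ∀ v ∈ f n, ∀ᶠ i in l, v ∈ F i n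

namespace EventuallyExtends

open Combinator

variable {ι : Type*} {l : Filter ι} {F G : ι → ℕ →. ℕ} {f g : ℕ →. ℕ}

theorem pair (hF : EventuallyExtends l F f) (hG : EventuallyExtends l G g) :
    EventuallyExtends l (fun i => Combinator.pair (F i) (G i)) (Combinator.pair f g) := by
  intro n v hv
  obtain ⟨a, ha, b, hb, rfl⟩ := mem_pair.1 hv
  filter_upwards [hF n a ha, hG n b hb] with i ha hb
  exact mem_pair.2 ⟨a, ha, b, hb, rfl⟩

theorem comp (hF : EventuallyExtends l F f) (hG : EventuallyExtends l G g) :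
    EventuallyExtends l (fun i => Combinator.comp (F i) (G i)) (Combinator.comp f g) := by
  intro n v hv
  obtain ⟨w, hw, hv⟩ := mem_comp.1 hv
  filter_upwards [hG n w hw, hF w v hv] with i hw hv
  exact mem_comp.2 ⟨w, hw, hv⟩

theorem prec (hF : EventuallyExtends l F f) (hG : EventuallyExtends l G g) :
    EventuallyExtends l (fun i => Combinator.prec (F i) (G i)) (Combinator.prec f g) := by
  intro n
  obtain ⟨a, m, rfl⟩ : ∃ a m, n = Nat.pair a m := ⟨_, _, (Nat.pair_unpair n).symm⟩
  induction m with
  | zero => simpa using hF a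
  | succ m ih =>
    simp only [prec_pair_succ]
    intro v hv
    obtain ⟨w, hw, hv⟩ := Part.mem_bind_iff.1 hv
    filter_upwards [ih w hw, hG _ v hv] with i hw hv
    exact Part.mem_bind_iff.2 ⟨w, hw, hv⟩

theorem rfind (hF : EventuallyExtends l F f) :
    EventuallyExtends l (fun i => Combinator.rfind (F i)) (Combinator.rfind f) := by
  intro a v hv
  obtain ⟨h0, hlt⟩ := mem_rfind.1 hv
  have hlt' : ∀ m < v, ∀ᶠ i in l, ∃ w ∈ F i (Nat.pair a m), w ≠ 0 := fun m hm =>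
    let ⟨w, hw, hw0⟩ := hlt m hm
    (hF _ w hw).mono fun i hi => ⟨w, hi, hw0⟩
  filter_upwards [hF _ 0 h0, (Set.finite_lt_nat v).eventually_all.2 hlt'] with i h0 hlt
  exact mem_rfind.2 ⟨h0, hlt⟩

end EventuallyExtends

def initSeg {α : Type*} (f : ℕ → α) (k : ℕ) : List α := (List.range k).map f

section initSeg

variable {α : Type*} (f : ℕ → α)

@[simp] theorem length_initSeg (k : ℕ) : (initSeg f k).length = k := by
  simp [initSeg]

@[simp] theorem getElem_initSeg {k q : ℕ} (h : q < (initSeg f k).length) :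
    (initSeg f k)[q] = f q := by
  simp [initSeg]

theorem getD_initSeg (k q : ℕ) (d : α) : (initSeg f k).getD q d = if q < k then f q else d := by
  by_cases h : q < k <;> simp [List.getD_eq_getElem?_getD, h]

theorem initSeg_prefix {k k' : ℕ} (h : k ≤ k') : initSeg f k <+: initSeg f k' := by
  rw [List.prefix_iff_eq_take, length_initSeg, initSeg, initSeg, ← List.map_take,
    List.take_range, min_eq_left h]

end initSeg

/-- `F α` is `f` computed with the oracle `o` replaced by the finite table `α`, queries beyond
`α` diverging; the fields are the use principle. -/
structure IsUseApprox (o : ℕ → ℕ) (f : ℕ →. ℕ) (F : List ℕ → ℕ →. ℕ) : Prop where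
  partrec : Partrec₂ F
  mono {α β : List ℕ} : α <+: β → ∀ n, F α n ≤ F β n
  sound (k : ℕ) : ∀ n, F (initSeg o k) n ≤ f n
  complete : EventuallyExtends atTop (fun k => F (initSeg o k)) f

namespace IsUseApprox

variable {o : ℕ → ℕ} {f g : ℕ →. ℕ} {F G : List ℕ → ℕ →. ℕ}

theorem of_partrec (hf : Nat.Partrec f) : IsUseApprox o f fun _ => f where
  partrec := (Partrec.nat_iff.2 hf).comp Computable.snd
  mono _ _ := le_rfl
  sound _ _ := le_rfl
  complete _ _ hv := Eventually.of_forall fun _ => hv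

theorem oracle : IsUseApprox o o fun α q => (α[q]? : Part ℕ) where
  partrec := Computable.ofOption Primrec.list_getElem?.to_comp
  mono h q v hv := by
    simp only [Part.mem_ofOption, Option.mem_def] at hv ⊢
    obtain ⟨hq, rfl⟩ := List.getElem?_eq_some_iff.1 hv
    exact List.prefix_iff_getElem?.1 h q hq
  sound k q v hv := by
    obtain ⟨hq, rfl⟩ := List.getElem?_eq_some_iff.1 (Part.mem_ofOption.1 hv)
    simp [PFun.coe_val]
  complete q v hv := eventually_atTop.2 ⟨q + 1, fun k hk => by
    rw [PFun.coe_val, Part.mem_some_iff] at hv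
    simp [show q < k by omega, hv]⟩

theorem pair (hf : IsUseApprox o f F) (hg : IsUseApprox o g G) :
    IsUseApprox o (Combinator.pair f g) fun α => Combinator.pair (F α) (G α) where
  partrec := Combinator.partrec₂_pair hf.partrec hg.partrec
  mono h := Combinator.pair_mono (hf.mono h) (hg.mono h)
  sound k := Combinator.pair_mono (hf.sound k) (hg.sound k)
  complete := hf.complete.pair hg.complete

theorem comp (hf : IsUseApprox o f F) (hg : IsUseApprox o g G) :
    IsUseApprox o (Combinator.comp f g) fun α => Combinator.comp (F α) (G α) where
  partrec := Combinator.partrec₂_comp hf.partrec hg.partrec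
  mono h := Combinator.comp_mono (hf.mono h) (hg.mono h)
  sound k := Combinator.comp_mono (hf.sound k) (hg.sound k)
  complete := hf.complete.comp hg.complete

theorem prec (hf : IsUseApprox o f F) (hg : IsUseApprox o g G) :
    IsUseApprox o (Combinator.prec f g) fun α => Combinator.prec (F α) (G α) where
  partrec := Combinator.partrec₂_prec hf.partrec hg.partrec
  mono h := Combinator.prec_mono (hf.mono h) (hg.mono h)
  sound k := Combinator.prec_mono (hf.sound k) (hg.sound k)
  complete := hf.complete.prec hg.complete

theorem rfind (hf : IsUseApprox o f F) :
    IsUseApprox o (Combinator.rfind f) fun α => Combinator.rfind (F α) where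
  partrec := Combinator.partrec₂_rfind hf.partrec
  mono h := Combinator.rfind_mono (hf.mono h)
  sound k := Combinator.rfind_mono (hf.sound k)
  complete := hf.complete.rfind

end IsUseApprox

theorem RecursiveInOracle.exists_isUseApprox {o : ℕ → ℕ} {f : ℕ →. ℕ}
    (h : RecursiveInOracle o f) : ∃ F, IsUseApprox o f F := by
  induction h with
  | zero => exact ⟨_, .of_partrec .zero⟩
  | succ => exact ⟨_, .of_partrec .succ⟩
  | left => exact ⟨_, .of_partrec .left⟩
  | right => exact ⟨_, .of_partrec .right⟩
  | oracle => exact ⟨_, .oracle⟩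
  | pair _ _ ihf ihg => exact ihf.elim fun _ hF => ihg.elim fun _ hG => ⟨_, hF.pair hG⟩
  | comp _ _ ihf ihg => exact ihf.elim fun _ hF => ihg.elim fun _ hG => ⟨_, hF.comp hG⟩
  | prec _ _ ihf ihg => exact ihf.elim fun _ hF => ihg.elim fun _ hG => ⟨_, hF.prec hG⟩
  | rfind _ ihf => exact ihf.elim fun _ hF => ⟨_, hF.rfind⟩

theorem RecursiveInOracle.of_nat_partrec {O f : ℕ →. ℕ} (h : Nat.Partrec f) :
    RecursiveInOracle O f := by
  induction h with
  | zero => exact .zero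
  | succ => exact .succ
  | left => exact .left
  | right => exact .right
  | pair _ _ ihf ihg => exact .pair ihf ihg
  | comp _ _ ihf ihg => exact .comp ihf ihg
  | prec _ _ ihf ihg => exact .prec ihf ihg
  | rfind _ ihf => exact .rfind ihf

theorem RecursiveInOracle.of_eq {O f g : ℕ →. ℕ} (h : RecursiveInOracle O f)
    (H : ∀ n, f n = g n) : RecursiveInOracle O g :=
  funext H ▸ h

theorem RecursiveInOracle.of_primrec {O : ℕ →. ℕ} {f : ℕ → ℕ} (h : Primrec f) :
    RecursiveInOracle O fun n => Part.some (f n) :=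
  .of_nat_partrec (Partrec.nat_iff.1 h.to_comp.partrec)

theorem ceIn_setOf_exists_pair_mem (A : Set ℕ) : CEIn A {a | ∃ m, Nat.pair a m ∈ A} := by
  refine ⟨_, .rfind (.comp (.of_primrec (Primrec.nat_sub.comp (Primrec.const 1) Primrec.id))
    .oracle), Set.ext fun a => Iff.trans ?_ Nat.rfind_dom.symm⟩
  unfold chi
  simp only [Set.mem_ofPred_eq, Part.bind_eq_bind, Part.bind_some, Part.map_eq_map, Part.map_some,
    Part.mem_some_iff, Part.some_dom]
  exact exists_congr fun m => by split_ifs with h <;> simp [h]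

section CE

variable {α : Type} [Primcodable α]

theorem cePred_exists {p : α → ℕ → Bool} (hp : Computable₂ p) :
    CEPred fun a => ∃ m, p a m = true := by
  refine ⟨fun a => (Nat.rfind fun m => Part.some (p a m)).map fun _ => (),
    (Partrec.rfind hp.partrec₂).map (Computable.const ()).to₂, fun a => ?_⟩
  refine Iff.trans ?_ Nat.rfind_dom.symm
  simp

theorem Partrec.exists_computable_stage {σ : Type} [Primcodable σ] {g : α →. σ}
    (hg : Partrec g) :
    ∃ s : α → ℕ → Option σ, Computable₂ s ∧ ∀ a v, v ∈ g a ↔ ∃ t, s a t = some v := by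
  obtain ⟨c, hc⟩ := Nat.Partrec.Code.exists_code.1 hg
  refine ⟨fun a t => (Nat.Partrec.Code.evaln t c (Encodable.encode a)).bind Encodable.decode,
    ?_, fun a v => ?_⟩
  · exact (Primrec.option_bind (Nat.Partrec.Code.primrec_evaln.comp
      ((Primrec.snd.pair (Primrec.const c)).pair (Primrec.encode.comp Primrec.fst)))
      (Primrec.decode.comp Primrec.snd).to₂).to_comp
  have heval : ∀ w, w ∈ Nat.Partrec.Code.eval c (Encodable.encode a) ↔
      ∃ v ∈ g a, Encodable.encode v = w := by
    intro w
    simp [hc, Encodable.encodek]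
  constructor
  · intro hv
    obtain ⟨t, ht⟩ := Nat.Partrec.Code.evaln_complete.1 ((heval _).2 ⟨v, hv, rfl⟩)
    exact ⟨t, by simp [Option.mem_def.1 ht, Encodable.encodek]⟩
  · rintro ⟨t, ht⟩
    obtain ⟨w, hw, hwv⟩ := Option.bind_eq_some_iff.1 ht
    obtain ⟨v', hv', rfl⟩ := (heval w).1 (Nat.Partrec.Code.evaln_sound hw)
    rw [Encodable.encodek, Option.some_inj] at hwv
    exact hwv ▸ hv'

theorem cePred_exists_and_mem {p : α → ℕ → Bool} (hp : Computable₂ p) {G : α → ℕ →. ℕ}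
    (hG : Partrec₂ G) (v : ℕ) : CEPred fun a => ∃ n, p a n = true ∧ v ∈ G a n := by
  obtain ⟨s, hs, hsG⟩ := Partrec.exists_computable_stage hG
  have hq : Computable₂ fun (a : α) (t : ℕ) =>
      p a t.unpair.1 && decide (s (a, t.unpair.1) t.unpair.2 = some v) := by
    have hn : Computable fun q : α × ℕ => q.2.unpair.1 :=
      (Primrec.fst.comp (Primrec.unpair.comp Primrec.snd)).to_comp
    exact (Primrec.and.to_comp.comp (hp.comp Computable.fst hn)
      (Primrec.eq.decide.to_comp.comp (hs.comp (Computable.fst.pair hn)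
        (Primrec.snd.comp (Primrec.unpair.comp Primrec.snd)).to_comp)
        (Computable.const _))).to₂
  obtain ⟨f, hf, hfa⟩ := cePred_exists hq
  refine ⟨f, hf, fun a => Iff.trans ?_ (hfa a)⟩
  simp only [Bool.and_eq_true, decide_eq_true_eq]
  constructor
  · rintro ⟨n, hn, hv⟩
    obtain ⟨t, ht⟩ := (hsG (a, n) v).1 hv
    exact ⟨Nat.pair n t, by simpa [hn] using ht⟩
  · rintro ⟨t, hn, ht⟩
    exact ⟨_, hn, (hsG _ v).2 ⟨_, ht⟩⟩

end CE

open Classical in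
theorem seg_eq_initSeg (X : Set ℕ) (k : ℕ) : seg X k = initSeg (fun n => decide (n ∈ X)) k :=
  rfl

open Classical in
theorem getD_seg (X : Set ℕ) (k i : ℕ) (b : Bool) :
    (seg X k).getD i b = if i < k then decide (i ∈ X) else b :=
  getD_initSeg _ k i b

@[simp] theorem length_seg (X : Set ℕ) (k : ℕ) : (seg X k).length = k := by
  simp [seg_eq_initSeg]

theorem seg_prefix_seg (X : Set ℕ) {k k' : ℕ} (h : k ≤ k') : seg X k <+: seg X k' :=
  initSeg_prefix _ h

namespace OneGeneric

variable {X : Set ℕ}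

theorem exists_seg_mem_of_dense (hX : OneGeneric X) {S : Set (List Bool)} (hS : CEPred (· ∈ S))
    (hdense : ∀ σ, ∃ τ ∈ S, σ <+: τ) : ∃ k, seg X k ∈ S :=
  (hX S hS).resolve_right fun ⟨k, hk⟩ =>
    let ⟨τ, hτ, hkτ⟩ := hdense (seg X k)
    hk τ hkτ hτ

theorem exists_not_mem (hX : OneGeneric X) {g : ℕ → ℕ} (hg : Computable g)
    (hunbdd : ∀ b, ∃ m, b ≤ g m) : ∃ m, g m ∉ X := by
  have hS := cePred_exists (p := fun (σ : List Bool) m => !σ.getD (g m) true)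
    (Primrec.not.to_comp.comp
      ((Primrec.list_getD true).to_comp.comp Computable.fst (hg.comp Computable.snd))).to₂
  obtain ⟨k, m, hm⟩ := hX.exists_seg_mem_of_dense hS fun σ => by
    obtain ⟨m, hm⟩ := hunbdd σ.length
    refine ⟨σ ++ List.replicate (g m + 1 - σ.length) false, ⟨m, ?_⟩, List.prefix_append _ _⟩
    rw [List.getD_append_right _ _ _ _ hm]
    simp [show g m - σ.length < g m + 1 - σ.length by omega]
  refine ⟨m, fun hmX => ?_⟩
  rw [getD_seg] at hm
  split_ifs at hm <;> simp_all

end OneGeneric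

def certSet (X : Set ℕ) : Set ℕ := {q | q.unpair.1 ∈ X ∧ 2 * q + 1 ∉ X}

def certSeg (σ : List Bool) : List ℕ :=
  initSeg (fun q => bif σ.getD q.unpair.1 false && !σ.getD (2 * q + 1) false then 1 else 0)
    (σ.length / 2)

theorem certSeg_seg (X : Set ℕ) (k : ℕ) :
    certSeg (seg X k) = initSeg ((certSet X).indicator 1) (k / 2) := by
  rw [certSeg, length_seg]
  refine List.map_congr_left fun q hq => ?_
  have hq : 2 * q + 1 < k := by simp at hq; omega
  have ha : q.unpair.1 < k := (Nat.unpair_left_le q).trans_lt (by omega)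
  rw [getD_seg, getD_seg, if_pos ha, if_pos hq]
  by_cases h1 : q.unpair.1 ∈ X <;> by_cases h2 : 2 * q + 1 ∈ X <;> simp [certSet, h1, h2]

theorem primrec_certSeg : Primrec certSeg := by
  refine Primrec.list_map (Primrec.list_range.comp
    (Primrec.nat_div.comp Primrec.list_length (Primrec.const 2))) ?_
  have hbit := Primrec.list_getD (α := Bool) false
  exact (Primrec.cond
    (Primrec.and.comp (hbit.comp Primrec.fst (Primrec.fst.comp (Primrec.unpair.comp Primrec.snd)))
      (Primrec.not.comp (hbit.comp Primrec.fst (Primrec.nat_double_succ.comp Primrec.snd))))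
    (Primrec.const 1) (Primrec.const 0)).to₂

theorem exists_two_mul_mem_certSet_eq_seg_eq (X : Set ℕ) {k r : ℕ} (hkr : k ≤ 2 * r) :
    ∃ X', 2 * r ∈ X' ∧ certSet X' = certSet X ∧ seg X' k = seg X k := by
  -- switching on bit `2q + 1` can only take `q` out of `certSet`
  set X' := X ∪ {2 * r} ∪ {i | k ≤ i ∧ ∃ q ∉ certSet X, i = 2 * q + 1}
  have hlow : ∀ i < k, i ∈ X' ↔ i ∈ X := fun i hi => by
    simp [X', show i ≠ 2 * r by omega, show ¬ k ≤ i by omega]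
  have hodd : ∀ q, 2 * q + 1 ∈ X' ↔ 2 * q + 1 ∈ X ∨ (k ≤ 2 * q + 1 ∧ q ∉ certSet X) := fun q => by
    simp only [X', Set.mem_union, Set.mem_singleton_iff, Set.mem_ofPred_eq]
    constructor
    · rintro ((h | h) | ⟨hk, q', hq', h⟩)
      · exact Or.inl h
      · omega
      · obtain rfl : q' = q := by omega
        exact Or.inr ⟨hk, hq'⟩
    · rintro (h | ⟨hk, hq⟩)
      exacts [Or.inl (Or.inl h), Or.inr ⟨hk, q, hq, rfl⟩]
  refine ⟨X', by simp [X'], ?_, ?_⟩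
  · ext q
    have ha := Nat.unpair_left_le q
    by_cases hq : q ∈ certSet X
    · simp only [hq, iff_true]
      exact ⟨Or.inl (Or.inl hq.1), by simp [hodd, hq.2, hq]⟩
    by_cases hk : k ≤ 2 * q + 1
    · exact iff_of_false (fun h => h.2 ((hodd q).2 (Or.inr ⟨hk, hq⟩))) hq
    · exact and_congr (hlow _ (by omega)) (not_congr (hlow _ (by omega)))
  · simp only [seg_eq_initSeg, initSeg]
    exact List.map_congr_left fun i hi => by simp [hlow i (by simpa using hi)]

theorem turingLE_certSet (X : Set ℕ) : TuringLE (certSet X) X := by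
  have hand : Primrec fun n : ℕ => n.unpair.1 * (1 - n.unpair.2) :=
    (Primrec.nat_mul.comp Primrec.fst (Primrec.nat_sub.comp (Primrec.const 1) Primrec.snd)).comp
      Primrec.unpair
  have h := RecursiveInOracle.comp (.of_primrec hand)
    (.pair (.comp (O := chi X) .oracle .left) (.comp .oracle (.of_primrec Primrec.nat_double_succ)))
  refine h.of_eq fun q => ?_
  unfold chi
  by_cases h1 : q.unpair.1 ∈ X <;> by_cases h2 : 2 * q + 1 ∈ X <;>
    simp [certSet, Seq.seq, h1, h2]

namespace OneGeneric

variable {X : Set ℕ}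

theorem exists_pair_mem_certSet_iff (hX : OneGeneric X) (a : ℕ) :
    (∃ m, Nat.pair a m ∈ certSet X) ↔ a ∈ X := by
  refine ⟨fun ⟨m, hm⟩ => by simpa using hm.1, fun ha => ?_⟩
  have hg : Computable fun m => 2 * Nat.pair a m + 1 :=
    (Primrec.nat_double_succ.comp (Primrec₂.natPair.comp (Primrec.const a) Primrec.id)).to_comp
  obtain ⟨m, hm⟩ := hX.exists_not_mem hg fun b => ⟨b, by have := Nat.right_le_pair a b; omega⟩
  exact ⟨m, by simpa using ha, hm⟩

theorem not_turingLE_certSet (hX : OneGeneric X) : ¬ TuringLE X (certSet X) := by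
  intro h
  obtain ⟨F, hF⟩ := RecursiveInOracle.exists_isUseApprox (o := (certSet X).indicator 1) h
  set S : Set (List Bool) := {σ | ∃ n, σ.getD n false = true ∧ 0 ∈ F (certSeg σ) n}
  have hS : CEPred (· ∈ S) :=
    cePred_exists_and_mem (G := fun σ n => F (certSeg σ) n) (Primrec.list_getD false).to_comp
      (hF.partrec.comp (primrec_certSeg.to_comp.comp Computable.fst) Computable.snd) 0
  rcases hX S hS with ⟨k, n, hn, h0⟩ | ⟨k, hk⟩
  · have hnX : n ∈ X := by
      rw [getD_seg] at hn
      split_ifs at hn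
      simpa using hn
    have h0X := hF.sound _ n 0 (by rwa [certSeg_seg] at h0)
    simp [chi, hnX] at h0X
  · have hg : Computable fun m => 2 * (m + k) :=
      (Primrec.nat_double.comp (Primrec.nat_add.comp Primrec.id (Primrec.const k))).to_comp
    obtain ⟨m, hm⟩ := hX.exists_not_mem hg fun b => ⟨b, by omega⟩
    obtain ⟨X', hn, hcert, hseg⟩ :=
      exists_two_mul_mem_certSet_eq_seg_eq X (k := k) (r := m + k) (by omega)
    obtain ⟨L, hL⟩ := eventually_atTop.1 (hF.complete (2 * (m + k)) 0 (by simp [chi, hm]))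
    refine hk (seg X' (2 * L + 2 * (m + k) + 1)) (hseg ▸ seg_prefix_seg X' (by omega))
      ⟨2 * (m + k), ?_, ?_⟩
    · rw [getD_seg, if_pos (by omega)]
      simpa using hn
    · rw [certSeg_seg, hcert]
      exact hL _ (by omega)

end OneGeneric

/-- Every 1-generic real is relatively c.e.a. -/
theorem oneGeneric_relatively_cea (X : Set ℕ) (hX : OneGeneric X) :
    ∃ Y : Set ℕ, (TuringLE Y X ∧ ¬ TuringLE X Y) ∧ CEIn Y X := by
  refine ⟨certSet X, ⟨turingLE_certSet X, hX.not_turingLE_certSet⟩, ?_⟩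
  have hce := ceIn_setOf_exists_pair_mem (certSet X)
  rwa [Set.ext hX.exists_pair_mem_certSet_iff] at hce
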